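/- arXiv:1310.3898 — 4 statements merged into one kernel-verified Lean document; each statement's English description precedes it below -/
import Mathlib

section
/- For the (max,min)-product C of two n×n matrices A and B over ℤ∪{-∞,∞}, i.e. C[i,j] = max_{k} min(A[i,k], B[k,j]), one has C[i,j] = max{(A ◁ B)[i,j], (Bᵀ ◁ Aᵀ)[j,i]} for all i,j, where (X ◁ Y)[i,j] = max{X[i,k] : X[i,k] ≤ Y[k,j]} if some k satisfies X[i,k] ≤ Y[k,j], and -∞ otherwise. -/
/-- The product `X ◁ Y`: `(X ◁ Y)[i,j]` is the maximum of `X[i,k]` over all `k`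
with `X[i,k] ≤ Y[k,j]`, and `⊥` (i.e. `-∞`) if there is no such `k`. -/
noncomputable def leftslice (n : ℕ) (X Y : Fin n → Fin n → WithBot (WithTop ℤ)) (i j : Fin n) :
    WithBot (WithTop ℤ) :=
  (Finset.univ.filter fun k => X i k ≤ Y k j).sup fun k => X i k

/-- The `(max,min)`-product `C` of `A` and `B` satisfies
`C[i,j] = max ((A ◁ B)[i,j], (Bᵀ ◁ Aᵀ)[j,i])`. -/
theorem maxmin_eq_max_leftslice (n : ℕ)
    (A B : Fin n → Fin n → WithBot (WithTop ℤ))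
    (C : Fin n → Fin n → WithBot (WithTop ℤ))
    (hC : ∀ i j, C i j = Finset.univ.sup fun k => min (A i k) (B k j)) :
    ∀ i j, C i j =
      max (leftslice n A B i j)
        (leftslice n (fun a b => B b a) (fun a b => A b a) j i) := by
  intro i j
  rw [hC]
  unfold leftslice
  apply le_antisymm
  · apply Finset.sup_le
    intro k _
    rcases le_total (A i k) (B k j) with h | h
    · refine le_max_of_le_left ?_
      rw [min_eq_left h]
      exact Finset.le_sup (Finset.mem_filter.mpr ⟨Finset.mem_univ k, h⟩)
    · refine le_max_of_le_right ?_
      rw [min_eq_right h]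
      exact Finset.le_sup (f := fun k => B k j) (Finset.mem_filter.mpr ⟨Finset.mem_univ k, h⟩)
  · refine max_le (Finset.sup_le ?_) (Finset.sup_le ?_)
    · intro k hk
      have h := (Finset.mem_filter.mp hk).2
      calc A i k = min (A i k) (B k j) := (min_eq_left h).symm
        _ ≤ _ := Finset.le_sup (f := fun k => min (A i k) (B k j)) (Finset.mem_univ k)
    · intro k hk
      have h := (Finset.mem_filter.mp hk).2
      calc B k j = min (A i k) (B k j) := (min_eq_right h).symm
        _ ≤ _ := Finset.le_sup (f := fun k => min (A i k) (B k j)) (Finset.mem_univ k)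
end

section
/- Let L be the sorted (increasing) list of all finite entries of matrices A⁽¹⁾,…,A⁽ᵘ⁾ partitioned into t consecutive blocks L₁,…,L_t. Define A⁽ˣ⁾_r[i,j] = A⁽ˣ⁾[i,j] if A⁽ˣ⁾[i,j] ∈ L_r and ∞ otherwise; Ā⁽ˣ⁾_r[i,j] = 1 iff A⁽ˣ⁾[i,j] ∈ L_r; B⁽ʸ⁾_r[i,j] = B⁽ʸ⁾[i,j] if min L_r ≤ B⁽ʸ⁾[i,j] < max L_r and -∞ otherwise; B̄⁽ʸ⁾_r[i,j] = 1 iff B⁽ʸ⁾[i,j] ≥ max L_r. Then for all x, y: A⁽ˣ⁾ ∗ B⁽ʸ⁾ = Σ_{r=1}^{t} (Ā⁽ˣ⁾_r · B̄⁽ʸ⁾_r) + Σ_{r=1}^{t} (A⁽ˣ⁾_r ∗ B⁽ʸ⁾_r), where + and Σ denote entrywise Boolean OR and · is the Boolean matrix product. -/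
/-- Block decomposition of the existence dominance product.  Entries of the
matrices `A⁽ˣ⁾` live in `ℤ ∪ {∞}` (no `⊥`), entries of the `B⁽ʸ⁾` live in
`ℤ ∪ {-∞}` (no `⊤`), all inside `WithBot (WithTop ℤ)`.  The finite entries of
the `A⁽ˣ⁾` are partitioned into `t` blocks `L_1, …, L_t` (membership of the
entry `A⁽ˣ⁾[i,k]` in block `r` is expressed by `idx x i k = some r`), the
blocks being consecutive pieces of the sorted list of finite entries, with
minimum `mn r` and maximum `mx r`.  Then for all `x, y, i, j`:
`(A⁽ˣ⁾ ∗ B⁽ʸ⁾)[i,j] = 1` iff `Σ_r (Ā⁽ˣ⁾_r · B̄⁽ʸ⁾_r)[i,j] = 1` or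
`Σ_r (A⁽ˣ⁾_r ∗ B⁽ʸ⁾_r)[i,j] = 1`. -/
theorem existence_dominance_block_decomposition
    (n u v t : ℕ)
    (A : Fin u → Fin n → Fin n → WithBot (WithTop ℤ))
    (B : Fin v → Fin n → Fin n → WithBot (WithTop ℤ))
    (hA : ∀ x i k, A x i k ≠ ⊥)
    (hB : ∀ y k j, B y k j ≠ ⊤)
    (idx : Fin u → Fin n → Fin n → Option (Fin t))
    (mn mx : Fin t → ℤ)
    (hidx : ∀ x i k, (idx x i k).isSome ↔ A x i k ≠ ⊤)
    (hmem : ∀ x i k r, idx x i k = some r →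
      ((mn r : WithTop ℤ) : WithBot (WithTop ℤ)) ≤ A x i k ∧
        A x i k ≤ ((mx r : WithTop ℤ) : WithBot (WithTop ℤ)))
    (hord : ∀ r r' : Fin t, r < r' → mx r ≤ mn r')
    (Ar : Fin u → Fin t → Fin n → Fin n → WithBot (WithTop ℤ))
    (hAr : ∀ x r i k, Ar x r i k =
      if idx x i k = some r then A x i k else (⊤ : WithBot (WithTop ℤ)))
    (Abar : Fin u → Fin t → Fin n → Fin n → Prop)
    (hAbar : ∀ x r i k, Abar x r i k ↔ idx x i k = some r)
    (Br : Fin v → Fin t → Fin n → Fin n → WithBot (WithTop ℤ))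
    (hBr : ∀ y r k j, Br y r k j =
      if ((mn r : WithTop ℤ) : WithBot (WithTop ℤ)) ≤ B y k j ∧
          B y k j < ((mx r : WithTop ℤ) : WithBot (WithTop ℤ))
        then B y k j else (⊥ : WithBot (WithTop ℤ)))
    (Bbar : Fin v → Fin t → Fin n → Fin n → Prop)
    (hBbar : ∀ y r k j, Bbar y r k j ↔
      ((mx r : WithTop ℤ) : WithBot (WithTop ℤ)) ≤ B y k j) :
    ∀ x y i j,
      (∃ k, A x i k ≤ B y k j) ↔
        ((∃ r k, Abar x r i k ∧ Bbar y r k j) ∨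
         (∃ r k, Ar x r i k ≤ Br y r k j)) := by
  intro x y i j
  constructor
  · rintro ⟨k, hk⟩
    have hAne : A x i k ≠ ⊤ := by
      intro h
      exact hB y k j (top_le_iff.mp (h ▸ hk))
    obtain ⟨r, hr⟩ := Option.isSome_iff_exists.mp ((hidx x i k).mpr hAne)
    by_cases hbig : ((mx r : WithTop ℤ) : WithBot (WithTop ℤ)) ≤ B y k j
    · exact Or.inl ⟨r, k, (hAbar x r i k).mpr hr, (hBbar y r k j).mpr hbig⟩
    · refine Or.inr ⟨r, k, ?_⟩
      rw [hAr, hBr, if_pos hr, if_pos ⟨le_trans (hmem x i k r hr).1 hk, lt_of_not_ge hbig⟩]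
      exact hk
  · rintro (⟨r, k, ha, hb⟩ | ⟨r, k, h⟩)
    · exact ⟨k, le_trans ((hmem x i k r ((hAbar x r i k).mp ha)).2) ((hBbar y r k j).mp hb)⟩
    · rw [hAr, hBr] at h
      by_cases hr : idx x i k = some r
      · rw [if_pos hr] at h
        by_cases hc : ((mn r : WithTop ℤ) : WithBot (WithTop ℤ)) ≤ B y k j ∧
            B y k j < ((mx r : WithTop ℤ) : WithBot (WithTop ℤ))
        · rw [if_pos hc] at h; exact ⟨k, h⟩
        · rw [if_neg hc] at h
          exact absurd (le_bot_iff.mp h) (hA x i k)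
      · rw [if_neg hr] at h
        exfalso
        split at h
        · exact hB y k j (top_le_iff.mp h)
        · exact absurd (top_le_iff.mp h) bot_ne_top
end

section
/- Let A, B be n×n matrices with entries in ℤ∪{∞} whose distance product C (C[i,j] = min_k (A[i,k]+B[k,j])) has all finite entries in [0, W). For integers d₁, d₂ ≥ 0, define A'_{d₁}[i,j] = A[i,j] - d₁W/2^{ℓ/2} and B'_{d₂}[i,j] = -B[i,j] + d₂W/2^{ℓ}. Then for d = d₁·2^{ℓ/2} + d₂ and the strict existence dominance product D_d = A'_{d₁} ⊛ B'_{d₂}: D_d[i,j] = 0 if and only if C[i,j] ≥ dW/2^{ℓ}. -/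
/-- Bit extraction via strict dominance: with `ℓ = 2h`, `W = 2^{2h}·W₀`,
`d = d₁·2^h + d₂`, the strict existence dominance product
`D_d = A'_{d₁} ⊛ B'_{d₂}` (where `A'_{d₁}[i,k] = A[i,k] - d₁W/2^{ℓ/2}` and
`B'_{d₂}[k,j] = -B[k,j] + d₂W/2^ℓ`, infinite entries following the usual
conventions, so `D_d[i,j] = 1` iff there exist finite entries with
`A[i,k] - d₁·2^h·W₀ < -B[k,j] + d₂·W₀`) satisfies
`D_d[i,j] = 0 ↔ C[i,j] ≥ dW/2^ℓ`, where `C` is the distance product. -/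
theorem strict_dominance_threshold (n h : ℕ) (hh : 0 < h)
    (W0 : ℤ) (hW0 : 0 < W0)
    (A B : Fin n → Fin n → WithTop ℤ)
    (C : Fin n → Fin n → WithTop ℤ)
    (hC : ∀ i j, C i j = Finset.univ.inf fun k => A i k + B k j)
    (hfin : ∀ i j (z : ℤ), C i j = (z : WithTop ℤ) → 0 ≤ z ∧ z < 2 ^ (2 * h) * W0)
    (d₁ d₂ d : ℕ) (hd : d = d₁ * 2 ^ h + d₂)
    (Dd : Fin n → Fin n → Prop)
    (hDd : ∀ i j, Dd i j ↔ ∃ (k : Fin n) (za zb : ℤ),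
      A i k = (za : WithTop ℤ) ∧ B k j = (zb : WithTop ℤ) ∧
        za - (d₁ : ℤ) * 2 ^ h * W0 < -zb + (d₂ : ℤ) * W0) :
    ∀ i j, ¬ Dd i j ↔ (((d : ℤ) * W0 : ℤ) : WithTop ℤ) ≤ C i j := by
  intro i j
  rw [hDd, hC]
  constructor
  · intro hnd
    rw [Finset.le_inf_iff]
    intro k _
    by_contra hlt
    push_neg at hlt
    have hne : A i k + B k j ≠ ⊤ := ne_top_of_lt hlt
    have hAne : A i k ≠ ⊤ := fun hA => hne (by simp [hA])
    have hBne : B k j ≠ ⊤ := fun hB => hne (by simp [hB])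
    obtain ⟨za, hA⟩ := WithTop.ne_top_iff_exists.mp hAne
    obtain ⟨zb, hB⟩ := WithTop.ne_top_iff_exists.mp hBne
    rw [← hA, ← hB, ← WithTop.coe_add, WithTop.coe_lt_coe] at hlt
    refine hnd ⟨k, za, zb, hA.symm, hB.symm, ?_⟩
    subst hd
    push_cast at hlt ⊢
    linarith
  · rintro hle ⟨k, za, zb, hA, hB, hlt⟩
    have h1 := le_trans hle (Finset.inf_le (Finset.mem_univ k))
    rw [hA, hB, ← WithTop.coe_add, WithTop.coe_le_coe] at h1
    subst hd
    push_cast at h1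
    linarith
end

section
/- Let A be an n×n matrix over ℤ∪{∞}. For each row i, let the finite-order sort of row i be partitioned into s = ⌈n/g⌉ consecutive parts R₁ⁱ,…,R_sⁱ of size at most g each (with all entries in R_rⁱ ≤ all entries in R_{r'}ⁱ for r < r'). Define A_r[i,j] = A[i,j] if A[i,j] ∈ R_rⁱ, ∞ otherwise. Let B be any n×n matrix over ℤ∪{-∞} and C = A ◁ B. Then for all (i,j): if no r ∈ {1,…,s} satisfies (A_r ∗ B)[i,j] = 1 then C[i,j] = -∞; and otherwise, letting r* be the largest such r, C[i,j] = max{ A_{r*}[i,k] : k ∈ {1,…,n}, A_{r*}[i,k] ≤ B[k,j] }. -/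
/-- Correctness of Step 2 of the `(max,min)`-product algorithm.  The finite
entries of each row `i` of `A` are partitioned into `s` parts (the part of
entry `A[i,j]` being `idx i j`), each of size at most `g`, ordered increasingly.
`A_r` keeps only the entries of part `r` (other entries are `∞`), and
`C = A ◁ B`.  Then for all `(i,j)`: if no `r` satisfies `(A_r ∗ B)[i,j] = 1`
then `C[i,j] = -∞`; otherwise, for the largest such `r*`,
`C[i,j] = max { A_{r*}[i,k] : A_{r*}[i,k] ≤ B[k,j] }`. -/
theorem maxmin_step2_correct (n s g : ℕ)
    (A B : Fin n → Fin n → WithBot (WithTop ℤ))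
    (hA : ∀ i j, A i j ≠ ⊥)
    (hB : ∀ k j, B k j ≠ ⊤)
    (idx : Fin n → Fin n → Option (Fin s))
    (hidx : ∀ i j, (idx i j).isSome ↔ A i j ≠ ⊤)
    (hsize : ∀ i (r : Fin s), (Finset.univ.filter fun j => idx i j = some r).card ≤ g)
    (hord : ∀ i j j' (r r' : Fin s),
      idx i j = some r → idx i j' = some r' → r < r' → A i j ≤ A i j')
    (Ar : Fin s → Fin n → Fin n → WithBot (WithTop ℤ))
    (hAr : ∀ r i j, Ar r i j =
      if idx i j = some r then A i j else (⊤ : WithBot (WithTop ℤ)))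
    (C : Fin n → Fin n → WithBot (WithTop ℤ))
    (hC : ∀ i j, C i j =
      (Finset.univ.filter fun k => A i k ≤ B k j).sup fun k => A i k) :
    ∀ i j,
      ((¬ ∃ r k, Ar r i k ≤ B k j) → C i j = ⊥) ∧
      (∀ r₀ : Fin s,
        (∃ k, Ar r₀ i k ≤ B k j) →
        (∀ r : Fin s, r₀ < r → ¬ ∃ k, Ar r i k ≤ B k j) →
        C i j = (Finset.univ.filter fun k => Ar r₀ i k ≤ B k j).sup
          fun k => Ar r₀ i k) := by

  intro i j
  have key : ∀ (r : Fin s) (k : Fin n), Ar r i k ≤ B k j →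
      idx i k = some r ∧ A i k ≤ B k j := by
    intro r k h
    rw [hAr] at h
    by_cases hik : idx i k = some r
    · exact ⟨hik, by simpa [hik] using h⟩
    · rw [if_neg hik] at h
      exact absurd (top_le_iff.mp h) (hB k j)
  constructor
  · intro hno
    rw [hC]
    have hemp : (Finset.univ.filter fun k => A i k ≤ B k j) = ∅ := by
      apply Finset.filter_eq_empty_iff.mpr
      intro k _ hk
      have hAne : A i k ≠ ⊤ := fun h => hB k j (top_le_iff.mp (h ▸ hk))
      obtain ⟨r, hr⟩ := Option.isSome_iff_exists.mp ((hidx i k).mpr hAne)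
      exact hno ⟨r, k, by rw [hAr, if_pos hr]; exact hk⟩
    rw [hemp]
    simp
  · rintro r₀ ⟨k₀, hk₀⟩ hmax
    obtain ⟨hidx₀, hle₀⟩ := key r₀ k₀ hk₀
    have hArk₀ : Ar r₀ i k₀ = A i k₀ := by rw [hAr, if_pos hidx₀]
    have hmem₀ : k₀ ∈ Finset.univ.filter fun k => Ar r₀ i k ≤ B k j := by
      simp [hk₀]
    rw [hC]
    apply le_antisymm
    · apply Finset.sup_le
      intro k hk
      simp only [Finset.mem_filter] at hk
      have hAne : A i k ≠ ⊤ := fun h => hB k j (top_le_iff.mp (h ▸ hk.2))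
      obtain ⟨r, hr⟩ := Option.isSome_iff_exists.mp ((hidx i k).mpr hAne)
      have hAreq : Ar r i k = A i k := by rw [hAr, if_pos hr]
      have hrle : r ≤ r₀ := by
        by_contra h
        exact hmax r (lt_of_not_ge h) ⟨k, by rw [hAreq]; exact hk.2⟩
      rcases lt_or_eq_of_le hrle with h | h
      · calc A i k ≤ A i k₀ := hord i k k₀ r r₀ hr hidx₀ h
          _ = Ar r₀ i k₀ := hArk₀.symm
          _ ≤ _ := Finset.le_sup hmem₀
      · subst h
        have hmem : k ∈ Finset.univ.filter fun k => Ar r i k ≤ B k j := by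
          simp [hAreq, hk.2]
        calc A i k = Ar r i k := hAreq.symm
          _ ≤ _ := Finset.le_sup hmem
    · apply Finset.sup_le
      intro k hk
      simp only [Finset.mem_filter] at hk
      obtain ⟨hr, hle⟩ := key r₀ k hk.2
      have hAreq : Ar r₀ i k = A i k := by rw [hAr, if_pos hr]
      rw [hAreq]
      exact Finset.le_sup (f := fun k => A i k) (by simp [hle])
end
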